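/- arXiv:1703.04410 — 3 statements merged into one kernel-verified Lean document; each statement's English description precedes it below -/
import Mathlib

section
/- For finite simple graphs G₁ and G₂ on [d], the set of lattice points of Ω(𝒬_{G₁}, 𝒬_{G₂}) ⊂ ℝ^{d+1} is exactly {(ρ(W),1) : W ∈ S(G₁)} ∪ {(−ρ(W),−1) : W ∈ S(G₂)} ∪ {0_{d+1}}. -/
/-- A subset `W` of the vertex set is stable (independent) in `G`. -/
def isStable {d : ℕ} (G : SimpleGraph (Fin d)) (W : Set (Fin d)) : Prop :=
  ∀ i ∈ W, ∀ j ∈ W, i ≠ j → ¬ G.Adj i j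

/-- The indicator vector `ρ(W) ∈ ℝ^d` of a subset `W ⊆ [d]`. -/
noncomputable def rho {d : ℕ} (W : Set (Fin d)) : Fin d → ℝ :=
  W.indicator 1

/-- The stable set polytope of `G`. -/
noncomputable def stablePolytope {d : ℕ} (G : SimpleGraph (Fin d)) : Set (Fin d → ℝ) :=
  convexHull ℝ {x | ∃ W : Set (Fin d), isStable G W ∧ x = rho W}

/-- `Ω(𝒫,𝒬) = conv((𝒫 × {1}) ∪ (-𝒬 × {-1})) ⊆ ℝ^{d+1}`. -/
noncomputable def OmegaPoly {d : ℕ} (P Q : Set (Fin d → ℝ)) : Set (Fin (d + 1) → ℝ) :=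
  convexHull ℝ
    ((fun x : Fin d → ℝ => Fin.snoc x (1 : ℝ)) '' P ∪
      (fun x : Fin d → ℝ => Fin.snoc (-x) (-1 : ℝ)) '' Q)

/- ### Auxiliary material -/

lemma rho_cases {d : ℕ} (W : Set (Fin d)) (i : Fin d) : rho W i = 0 ∨ rho W i = 1 := by
  by_cases h : i ∈ W <;> simp [rho, h]

lemma rho_of_mem {d : ℕ} {W : Set (Fin d)} {i : Fin d} (h : i ∈ W) : rho W i = 1 := by
  simp [rho, h]

lemma rho_of_notMem {d : ℕ} {W : Set (Fin d)} {i : Fin d} (h : i ∉ W) : rho W i = 0 := by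
  simp [rho, h]

lemma mem_of_rho {d : ℕ} {W : Set (Fin d)} {i : Fin d} (h : rho W i = 1) : i ∈ W := by
  by_contra hc; simp [rho, hc] at h

lemma rho_empty {d : ℕ} : rho (∅ : Set (Fin d)) = 0 := by
  funext i; simp [rho]

lemma isStable_empty {d : ℕ} (G : SimpleGraph (Fin d)) : isStable G (∅ : Set (Fin d)) :=
  fun i hi => absurd hi (Set.notMem_empty i)

lemma sum_forces {ι : Type*} (t : Finset ι) (w c : ι → ℝ)
    (h0 : ∀ i ∈ t, 0 ≤ w i) (h1 : ∑ i ∈ t, w i = 1)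
    (hc : ∀ i ∈ t, 0 < w i → c i ≤ 1) (he : ∑ i ∈ t, w i * c i = 1) :
    ∀ i ∈ t, 0 < w i → c i = 1 := by
  have hz : ∑ i ∈ t, w i * (1 - c i) = 0 := by
    have : ∑ i ∈ t, w i * (1 - c i) = ∑ i ∈ t, w i - ∑ i ∈ t, w i * c i := by
      rw [← Finset.sum_sub_distrib]; exact Finset.sum_congr rfl fun i _ => by ring
    rw [this, h1, he]; ring
  have hnn : ∀ i ∈ t, 0 ≤ w i * (1 - c i) := by
    intro i hi
    rcases (h0 i hi).lt_or_eq with hw | hw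
    · exact mul_nonneg hw.le (by linarith [hc i hi hw])
    · rw [← hw]; simp
  intro i hi hwi
  have h := (Finset.sum_eq_zero_iff_of_nonneg hnn).1 hz i hi
  have : (1 : ℝ) - c i = 0 := by
    rcases mul_eq_zero.1 h with h' | h'
    · exact absurd h' (ne_of_gt hwi)
    · exact h'
  linarith

lemma sum_bound {ι : Type*} (t : Finset ι) (w c : ι → ℝ)
    (h0 : ∀ i ∈ t, 0 ≤ w i) (h1 : ∑ i ∈ t, w i = 1)
    (hc : ∀ i ∈ t, 0 < w i → |c i| ≤ 1) : |∑ i ∈ t, w i * c i| ≤ 1 := by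
  calc |∑ i ∈ t, w i * c i| ≤ ∑ i ∈ t, |w i * c i| := Finset.abs_sum_le_sum_abs _ _
    _ ≤ ∑ i ∈ t, w i := by
        refine Finset.sum_le_sum fun i hi => ?_
        rcases (h0 i hi).lt_or_eq with hw | hw
        · rw [abs_mul, abs_of_nonneg hw.le]
          calc w i * |c i| ≤ w i * 1 := mul_le_mul_of_nonneg_left (hc i hi hw) hw.le
            _ = w i := mul_one _
        · rw [← hw]; simp
    _ = 1 := h1

noncomputable def snocL (d : ℕ) : (Fin d → ℝ) →ₗ[ℝ] (Fin (d+1) → ℝ) where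
  toFun x := Fin.snoc x 0
  map_add' x y := by
    funext i
    refine Fin.lastCases ?_ (fun j => ?_) i <;> simp
  map_smul' a x := by
    funext i
    refine Fin.lastCases ?_ (fun j => ?_) i <;> simp

noncomputable def snocA (d : ℕ) : (Fin d → ℝ) →ᵃ[ℝ] (Fin (d+1) → ℝ) where
  toFun x := Fin.snoc x 1
  linear := snocL d
  map_vadd' p v := by
    funext i
    refine Fin.lastCases ?_ (fun j => ?_) i <;> simp [snocL]

noncomputable def snocNA (d : ℕ) : (Fin d → ℝ) →ᵃ[ℝ] (Fin (d+1) → ℝ) where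
  toFun x := Fin.snoc (-x) (-1)
  linear := -(snocL d)
  map_vadd' p v := by
    funext i
    refine Fin.lastCases ?_ (fun j => ?_) i <;> simp [snocL] <;> ring

/-- The lattice points of `Ω(𝒬_{G₁}, 𝒬_{G₂})` are exactly
`{(ρ(W),1) : W ∈ S(G₁)} ∪ {(-ρ(W),-1) : W ∈ S(G₂)} ∪ {0}`. -/
theorem stmt_4 {d : ℕ} (G₁ G₂ : SimpleGraph (Fin d)) :
    {x : Fin (d + 1) → ℝ |
        x ∈ OmegaPoly (stablePolytope G₁) (stablePolytope G₂) ∧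
        ∀ i, ∃ z : ℤ, x i = (z : ℝ)} =
      {x | ∃ W : Set (Fin d), isStable G₁ W ∧ x = Fin.snoc (rho W) (1 : ℝ)} ∪
      {x | ∃ W : Set (Fin d), isStable G₂ W ∧ x = Fin.snoc (-(rho W)) (-1 : ℝ)} ∪
      {0} := by
  classical
  have hΩ : OmegaPoly (stablePolytope G₁) (stablePolytope G₂)
      = convexHull ℝ (⇑(snocA d) '' {x | ∃ W : Set (Fin d), isStable G₁ W ∧ x = rho W} ∪
          ⇑(snocNA d) '' {x | ∃ W : Set (Fin d), isStable G₂ W ∧ x = rho W}) := by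
    unfold OmegaPoly stablePolytope
    rw [show (fun x : Fin d → ℝ => (Fin.snoc x (1:ℝ) : Fin (d+1) → ℝ)) = ⇑(snocA d) from rfl]
    rw [show (fun x : Fin d → ℝ => (Fin.snoc (-x) (-1:ℝ) : Fin (d+1) → ℝ)) = ⇑(snocNA d) from rfl]
    rw [AffineMap.image_convexHull, AffineMap.image_convexHull,
      convexHull_convexHull_union_left, convexHull_convexHull_union_right]
  ext x
  simp only [Set.mem_setOf_eq, Set.mem_union, Set.mem_singleton_iff]
  constructor
  · rintro ⟨hx, hint⟩
    rw [hΩ, convexHull_eq] at hx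
    obtain ⟨ι, t, w, z, hw0, hw1, hz, hx⟩ := hx
    rw [Finset.centerMass_eq_of_sum_1 _ _ hw1] at hx
    have hxc : ∀ k : Fin (d+1), x k = ∑ i ∈ t, w i * z i k := by
      intro k
      rw [← hx]
      simp [Finset.sum_apply]
    have hcls : ∀ i ∈ t, (∃ W, isStable G₁ W ∧ z i = Fin.snoc (rho W) (1:ℝ)) ∨
        (∃ W, isStable G₂ W ∧ z i = Fin.snoc (-(rho W)) (-1:ℝ)) := by
      intro i hi
      rcases hz i hi with ⟨y, ⟨W, hW, rfl⟩, hy⟩ | ⟨y, ⟨W, hW, rfl⟩, hy⟩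
      · exact Or.inl ⟨W, hW, hy.symm⟩
      · exact Or.inr ⟨W, hW, hy.symm⟩
    have hzlast : ∀ i ∈ t, z i (Fin.last d) = 1 ∨ z i (Fin.last d) = -1 := by
      intro i hi
      rcases hcls i hi with ⟨W, _, hzi⟩ | ⟨W, _, hzi⟩
      · left; rw [hzi]; simp
      · right; rw [hzi]; simp
    have hzcoord : ∀ i ∈ t, ∀ j : Fin d,
        |2 * z i (Fin.castSucc j) - z i (Fin.last d)| ≤ 1 := by
      intro i hi j
      rcases hcls i hi with ⟨W, _, hzi⟩ | ⟨W, _, hzi⟩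
      · rw [hzi]; simp only [Fin.snoc_castSucc, Fin.snoc_last]
        rcases rho_cases W j with h | h <;> rw [h] <;> norm_num
      · rw [hzi]; simp only [Fin.snoc_castSucc, Fin.snoc_last, Pi.neg_apply]
        rcases rho_cases W j with h | h <;> rw [h] <;> norm_num
    have hLbound : |x (Fin.last d)| ≤ 1 := by
      rw [hxc]
      exact sum_bound t w _ hw0 hw1
        (fun i hi _ => by rcases hzlast i hi with h | h <;> rw [h] <;> norm_num)
    have hcbound : ∀ j : Fin d, |2 * x (Fin.castSucc j) - x (Fin.last d)| ≤ 1 := by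
      intro j
      have heq : 2 * x (Fin.castSucc j) - x (Fin.last d)
          = ∑ i ∈ t, w i * (2 * z i (Fin.castSucc j) - z i (Fin.last d)) := by
        rw [hxc, hxc, Finset.mul_sum, ← Finset.sum_sub_distrib]
        exact Finset.sum_congr rfl fun i _ => by ring
      rw [heq]
      exact sum_bound t w _ hw0 hw1 (fun i hi _ => hzcoord i hi _)
    obtain ⟨zL, hzL⟩ := hint (Fin.last d)
    have hzL3 : zL = 1 ∨ zL = 0 ∨ zL = -1 := by
      rw [hzL, abs_le] at hLbound
      have h1' : (-1 : ℤ) ≤ zL := by exact_mod_cast hLbound.1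
      have h2' : zL ≤ 1 := by exact_mod_cast hLbound.2
      omega
    have hex : ∃ k ∈ t, 0 < w k := by
      by_contra hco
      push_neg at hco
      have : ∑ i ∈ t, w i = 0 :=
        Finset.sum_eq_zero fun i hi => le_antisymm (hco i hi) (hw0 i hi)
      rw [hw1] at this; norm_num at this
    rcases hzL3 with h1 | h0 | hm1
    · -- last coordinate is 1
      have hL : x (Fin.last d) = 1 := by rw [hzL, h1]; norm_num
      have hall : ∀ i ∈ t, 0 < w i → z i (Fin.last d) = 1 := by
        refine sum_forces t w _ hw0 hw1 ?_ ?_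
        · intro i hi _; rcases hzlast i hi with h | h <;> rw [h] <;> norm_num
        · rw [← hxc]; exact hL
      have hcase : ∀ i ∈ t, 0 < w i →
          ∃ W, isStable G₁ W ∧ z i = Fin.snoc (rho W) (1:ℝ) := by
        intro i hi hwi
        rcases hcls i hi with h | ⟨W, _, hzi⟩
        · exact h
        · exfalso
          have := hall i hi hwi
          rw [hzi] at this
          simp at this
          norm_num at this
      have hcoord01 : ∀ j : Fin d, x (Fin.castSucc j) = 0 ∨ x (Fin.castSucc j) = 1 := by
        intro j
        obtain ⟨zj, hzj⟩ := hint (Fin.castSucc j)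
        have hb := hcbound j
        rw [hzj, hL, abs_le] at hb
        have h1' : (0 : ℤ) ≤ zj := by
          have : (0:ℝ) ≤ (zj:ℝ) := by linarith [hb.1]
          exact_mod_cast this
        have h2' : zj ≤ 1 := by
          have : (zj:ℝ) ≤ 1 := by linarith [hb.2]
          exact_mod_cast this
        rw [hzj]
        interval_cases zj
        · left; norm_num
        · right; norm_num
      refine Or.inl (Or.inl ⟨{j | x (Fin.castSucc j) = 1}, ?_, ?_⟩)
      · intro i hi j hj hne hadj
        obtain ⟨k, hk, hwk⟩ := hex
        obtain ⟨W, hW, hzk⟩ := hcase k hk hwk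
        have hforce : ∀ m : Fin d, x (Fin.castSucc m) = 1 → m ∈ W := by
          intro m hm
          have hcle : ∀ i' ∈ t, 0 < w i' → z i' (Fin.castSucc m) ≤ 1 := by
            intro i' hi' hwi'
            obtain ⟨W', _, hz'⟩ := hcase i' hi' hwi'
            rw [hz']; simp only [Fin.snoc_castSucc]
            rcases rho_cases W' m with h | h <;> rw [h] <;> norm_num
          have hceq : ∑ i' ∈ t, w i' * z i' (Fin.castSucc m) = 1 := by
            rw [← hxc]; exact hm
          have := sum_forces t w (fun i' => z i' (Fin.castSucc m)) hw0 hw1 hcle hceq k hk hwk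
          simp only [hzk, Fin.snoc_castSucc] at this
          exact mem_of_rho this
        exact hW i (hforce i hi) j (hforce j hj) hne hadj
      · funext k
        refine Fin.lastCases ?_ (fun j => ?_) k
        · rw [Fin.snoc_last]; exact hL
        · rw [Fin.snoc_castSucc]
          rcases hcoord01 j with h | h
          · rw [h]
            exact (rho_of_notMem (by simp [Set.mem_setOf_eq, h])).symm
          · rw [h]
            exact (rho_of_mem (by exact h)).symm
    · -- last coordinate is 0
      have hL : x (Fin.last d) = 0 := by rw [hzL, h0]; norm_num
      refine Or.inr ?_
      funext k
      refine Fin.lastCases ?_ (fun j => ?_) k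
      · rw [hL]; simp
      · obtain ⟨zj, hzj⟩ := hint (Fin.castSucc j)
        have hb := hcbound j
        rw [hzj, hL, abs_le] at hb
        have h1' : (-1 : ℤ) ≤ 2 * zj := by
          have : (-1:ℝ) ≤ ((2 * zj : ℤ) : ℝ) := by push_cast; linarith [hb.1]
          exact_mod_cast this
        have h2' : 2 * zj ≤ 1 := by
          have : ((2 * zj : ℤ) : ℝ) ≤ 1 := by push_cast; linarith [hb.2]
          exact_mod_cast this
        have : zj = 0 := by omega
        rw [hzj, this]; simp
    · -- last coordinate is -1
      have hL : x (Fin.last d) = -1 := by rw [hzL, hm1]; norm_num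
      have hall : ∀ i ∈ t, 0 < w i → -(z i (Fin.last d)) = 1 := by
        refine sum_forces t w _ hw0 hw1 ?_ ?_
        · intro i hi _; rcases hzlast i hi with h | h <;> rw [h] <;> norm_num
        · have : ∑ i ∈ t, w i * -(z i (Fin.last d)) = -(∑ i ∈ t, w i * z i (Fin.last d)) := by
            rw [← Finset.sum_neg_distrib]
            exact Finset.sum_congr rfl fun i _ => by ring
          rw [this, ← hxc, hL]; norm_num
      have hcase : ∀ i ∈ t, 0 < w i →
          ∃ W, isStable G₂ W ∧ z i = Fin.snoc (-(rho W)) (-1:ℝ) := by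
        intro i hi hwi
        rcases hcls i hi with ⟨W, _, hzi⟩ | h
        · exfalso
          have := hall i hi hwi
          rw [hzi] at this
          simp at this
          norm_num at this
        · exact h
      have hcoord01 : ∀ j : Fin d, x (Fin.castSucc j) = 0 ∨ x (Fin.castSucc j) = -1 := by
        intro j
        obtain ⟨zj, hzj⟩ := hint (Fin.castSucc j)
        have hb := hcbound j
        rw [hzj, hL, abs_le] at hb
        have h1' : (-1 : ℤ) ≤ zj := by
          have : (-1:ℝ) ≤ (zj:ℝ) := by linarith [hb.1]
          exact_mod_cast this
        have h2' : zj ≤ 0 := by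
          have : (zj:ℝ) ≤ 0 := by linarith [hb.2]
          exact_mod_cast this
        rw [hzj]
        interval_cases zj
        · right; norm_num
        · left; norm_num
      refine Or.inl (Or.inr ⟨{j | x (Fin.castSucc j) = -1}, ?_, ?_⟩)
      · intro i hi j hj hne hadj
        obtain ⟨k, hk, hwk⟩ := hex
        obtain ⟨W, hW, hzk⟩ := hcase k hk hwk
        have hforce : ∀ m : Fin d, x (Fin.castSucc m) = -1 → m ∈ W := by
          intro m hm
          have hcle : ∀ i' ∈ t, 0 < w i' → -(z i' (Fin.castSucc m)) ≤ 1 := by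
            intro i' hi' hwi'
            obtain ⟨W', _, hz'⟩ := hcase i' hi' hwi'
            rw [hz']; simp only [Fin.snoc_castSucc, Pi.neg_apply]
            rcases rho_cases W' m with h | h <;> rw [h] <;> norm_num
          have hceq : ∑ i' ∈ t, w i' * -(z i' (Fin.castSucc m)) = 1 := by
            have : ∑ i' ∈ t, w i' * -(z i' (Fin.castSucc m))
                = -(∑ i' ∈ t, w i' * z i' (Fin.castSucc m)) := by
              rw [← Finset.sum_neg_distrib]
              exact Finset.sum_congr rfl fun i _ => by ring
            rw [this, ← hxc, hm]; norm_num
          have := sum_forces t w (fun i' => -(z i' (Fin.castSucc m))) hw0 hw1 hcle hceq k hk hwk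
          simp only [hzk, Fin.snoc_castSucc, Pi.neg_apply, neg_neg] at this
          exact mem_of_rho this
        exact hW i (hforce i hi) j (hforce j hj) hne hadj
      · funext k
        refine Fin.lastCases ?_ (fun j => ?_) k
        · rw [Fin.snoc_last]; exact hL
        · rw [Fin.snoc_castSucc, Pi.neg_apply]
          rcases hcoord01 j with h | h
          · rw [h, rho_of_notMem (by simp [Set.mem_setOf_eq, h])]
            norm_num
          · rw [h, rho_of_mem (by exact h)]
  · rintro ((⟨W, hW, rfl⟩ | ⟨W, hW, rfl⟩) | rfl)
    · refine ⟨?_, ?_⟩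
      · unfold OmegaPoly
        exact subset_convexHull ℝ _
          (Or.inl ⟨rho W, subset_convexHull ℝ _ ⟨W, hW, rfl⟩, rfl⟩)
      · intro k
        refine Fin.lastCases ?_ (fun j => ?_) k
        · exact ⟨1, by simp⟩
        · rw [Fin.snoc_castSucc]
          rcases rho_cases W j with h | h
          · exact ⟨0, by rw [h]; norm_num⟩
          · exact ⟨1, by rw [h]; norm_num⟩
    · refine ⟨?_, ?_⟩
      · unfold OmegaPoly
        exact subset_convexHull ℝ _
          (Or.inr ⟨rho W, subset_convexHull ℝ _ ⟨W, hW, rfl⟩, rfl⟩)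
      · intro k
        refine Fin.lastCases ?_ (fun j => ?_) k
        · exact ⟨-1, by simp⟩
        · rw [Fin.snoc_castSucc, Pi.neg_apply]
          rcases rho_cases W j with h | h
          · exact ⟨0, by rw [h]; norm_num⟩
          · exact ⟨-1, by rw [h]; norm_num⟩
    · refine ⟨?_, fun i => ⟨0, by simp⟩⟩
      unfold OmegaPoly
      have h0mem1 : (0 : Fin d → ℝ) ∈ stablePolytope G₁ :=
        subset_convexHull ℝ _ ⟨∅, isStable_empty G₁, rho_empty.symm⟩
      have h0mem2 : (0 : Fin d → ℝ) ∈ stablePolytope G₂ :=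
        subset_convexHull ℝ _ ⟨∅, isStable_empty G₂, rho_empty.symm⟩
      have hp : (Fin.snoc (0 : Fin d → ℝ) (1:ℝ) : Fin (d+1) → ℝ) ∈
          ((fun x : Fin d → ℝ => Fin.snoc x (1 : ℝ)) '' stablePolytope G₁ ∪
            (fun x : Fin d → ℝ => Fin.snoc (-x) (-1 : ℝ)) '' stablePolytope G₂) :=
        Or.inl ⟨0, h0mem1, rfl⟩
      have hq : (Fin.snoc (0 : Fin d → ℝ) (-1:ℝ) : Fin (d+1) → ℝ) ∈
          ((fun x : Fin d → ℝ => Fin.snoc x (1 : ℝ)) '' stablePolytope G₁ ∪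
            (fun x : Fin d → ℝ => Fin.snoc (-x) (-1 : ℝ)) '' stablePolytope G₂) :=
        Or.inr ⟨0, h0mem2, by simp⟩
      have h0eq : (0 : Fin (d+1) → ℝ)
          = (1/2 : ℝ) • (Fin.snoc (0 : Fin d → ℝ) (1:ℝ) : Fin (d+1) → ℝ)
            + (1/2 : ℝ) • (Fin.snoc (0 : Fin d → ℝ) (-1:ℝ) : Fin (d+1) → ℝ) := by
        funext k
        refine Fin.lastCases ?_ (fun j => ?_) k <;> simp
      rw [h0eq]
      exact (convex_convexHull ℝ _) (subset_convexHull ℝ _ hp) (subset_convexHull ℝ _ hq)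
        (by norm_num) (by norm_num) (by norm_num)
end

section
/- Let G₁ be a finite simple graph on [d] containing an odd antihole, i.e., an induced subgraph C whose complement is an odd cycle of length 2ℓ+1 with ℓ ≥ 2, and let G₂ be any finite simple graph on [d]. Then Ω(𝒬_{G₁}, 𝒬_{G₂}) does not possess the integer decomposition property: the point b = e_1 + ⋯ + e_{2ℓ+1} + ℓ·e_{d+1} lies in (ℓ+1)·Ω(𝒬_{G₁}, 𝒬_{G₂}) ∩ ℤ^{d+1} but is not a sum of ℓ+1 lattice points of Ω(𝒬_{G₁}, 𝒬_{G₂}). -/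
open Pointwise Finset

/-- A set `P ⊆ ℝ^N` has the integer decomposition property: every lattice point
of `nP` is a sum of `n` lattice points of `P`. -/
def hasIDP {N : ℕ} (P : Set (Fin N → ℝ)) : Prop :=
  ∀ n : ℕ, 1 ≤ n → ∀ a : Fin N → ℤ,
    (fun i => (a i : ℝ)) ∈ (n : ℝ) • P →
      ∃ b : Fin n → Fin N → ℤ,
        (∀ k, (fun i => (b k i : ℝ)) ∈ P) ∧ ∀ i, ∑ k, b k i = a i

namespace Stmt10Aux


lemma mod_succ (n x : ℕ) (hx : x < n) : (x + 1) % n = if x + 1 = n then 0 else x + 1 := by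
  split_ifs with h
  · rw [h, Nat.mod_self]
  · exact Nat.mod_eq_of_lt (by omega)

lemma no_three {n a b c : ℕ} (hn : 5 ≤ n) (ha : a < n) (hb : b < n) (hc : c < n)
    (hab : a ≠ b) (hac : a ≠ c) (hbc : b ≠ c)
    (rab : b = (a + 1) % n ∨ a = (b + 1) % n)
    (rac : c = (a + 1) % n ∨ a = (c + 1) % n)
    (rbc : c = (b + 1) % n ∨ b = (c + 1) % n) : False := by
  rw [mod_succ n a ha, mod_succ n b hb] at rab
  rw [mod_succ n a ha, mod_succ n c hc] at rac
  rw [mod_succ n b hb, mod_succ n c hc] at rbc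
  split_ifs at rab rac rbc <;> omega

lemma proj_linear {d : ℕ} (v : Fin d) : IsLinearMap ℝ (fun x : Fin d → ℝ => x v) :=
  ⟨fun _ _ => rfl, fun _ _ => rfl⟩

lemma sp_nonneg {d : ℕ} (G : SimpleGraph (Fin d)) (v : Fin d) :
    ∀ p ∈ stablePolytope G, 0 ≤ p v := by
  intro p hp
  refine convexHull_min ?_ (convex_halfSpace_ge (proj_linear v) 0) hp
  rintro x ⟨W, -, rfl⟩
  classical
  simp only [Set.mem_setOf_eq, rho, Set.indicator_apply]
  split_ifs <;> norm_num

lemma sp_le_one {d : ℕ} (G : SimpleGraph (Fin d)) (v : Fin d) :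
    ∀ p ∈ stablePolytope G, p v ≤ 1 := by
  intro p hp
  refine convexHull_min ?_ (convex_halfSpace_le (proj_linear v) 1) hp
  rintro x ⟨W, -, rfl⟩
  classical
  simp only [Set.mem_setOf_eq, rho, Set.indicator_apply]
  split_ifs <;> norm_num

lemma sp_Csum {d ℓ : ℕ} (hℓ : 2 ≤ ℓ) (hd : 2 * ℓ + 1 ≤ d) (G₁ : SimpleGraph (Fin d))
    (antihole : ∀ i j : Fin d, (i : ℕ) < 2 * ℓ + 1 → (j : ℕ) < 2 * ℓ + 1 →
      (G₁.Adj i j ↔ (i ≠ j ∧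
        ¬ ((j : ℕ) = ((i : ℕ) + 1) % (2 * ℓ + 1) ∨
          (i : ℕ) = ((j : ℕ) + 1) % (2 * ℓ + 1))))) :
    ∀ p ∈ stablePolytope G₁, ∑ j : Fin (2 * ℓ + 1), p (Fin.castLE hd j) ≤ 2 := by
  intro p hp
  classical
  have hlin : IsLinearMap ℝ (fun x : Fin d → ℝ => ∑ j : Fin (2 * ℓ + 1), x (Fin.castLE hd j)) := by
    constructor <;> intros <;> simp [Finset.sum_add_distrib, Finset.mul_sum]
  refine convexHull_min ?_ (convex_halfSpace_le hlin 2) hp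
  rintro x ⟨W, hW, rfl⟩
  simp only [Set.mem_setOf_eq, rho, Set.indicator_apply, Pi.one_apply]
  rw [Finset.sum_boole]
  have hcard : (Finset.univ.filter (fun j : Fin (2 * ℓ + 1) => Fin.castLE hd j ∈ W)).card ≤ 2 := by
    by_contra hcon
    push_neg at hcon
    rw [Finset.two_lt_card_iff] at hcon
    obtain ⟨a, b, c, ha, hb, hc, hab, hac, hbc⟩ := hcon
    simp only [Finset.mem_filter, Finset.mem_univ, true_and] at ha hb hc
    have hval : ∀ j : Fin (2 * ℓ + 1), ((Fin.castLE hd j : Fin d) : ℕ) < 2 * ℓ + 1 := by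
      intro j; simpa using j.isLt
    have key : ∀ x y : Fin (2 * ℓ + 1), x ≠ y → Fin.castLE hd x ∈ W → Fin.castLE hd y ∈ W →
        (y : ℕ) = ((x : ℕ) + 1) % (2 * ℓ + 1) ∨ (x : ℕ) = ((y : ℕ) + 1) % (2 * ℓ + 1) := by
      intro x y hxy hxW hyW
      have hne : Fin.castLE hd x ≠ Fin.castLE hd y := by
        intro h; exact hxy (Fin.castLE_injective _ h)
      have hadj := hW _ hxW _ hyW hne
      rw [antihole _ _ (hval x) (hval y)] at hadj
      push_neg at hadj
      have := hadj hne
      simpa [Fin.coe_castLE] using this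
    exact no_three (by omega) a.isLt b.isLt c.isLt
      (fun h => hab (Fin.ext h)) (fun h => hac (Fin.ext h)) (fun h => hbc (Fin.ext h))
      (key a b hab ha hb) (key a c hac ha hc) (key b c hbc hb hc)
  calc ((Finset.univ.filter (fun j : Fin (2 * ℓ + 1) => Fin.castLE hd j ∈ W)).card : ℝ)
      ≤ (2 : ℕ) := by exact_mod_cast hcard
    _ = 2 := by norm_num

lemma omega_le {d : ℕ} {P Q : Set (Fin d → ℝ)} {f : (Fin (d + 1) → ℝ) → ℝ}
    (hf : IsLinearMap ℝ f) {c : ℝ}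
    (hP : ∀ p ∈ P, f (Fin.snoc p 1) ≤ c)
    (hQ : ∀ q ∈ Q, f (Fin.snoc (-q) (-1)) ≤ c) :
    ∀ x ∈ OmegaPoly P Q, f x ≤ c := by
  intro x hx
  refine convexHull_min ?_ (convex_halfSpace_le hf c) hx
  rintro y (⟨p, hp, rfl⟩ | ⟨q, hq, rfl⟩)
  exacts [hP p hp, hQ q hq]

lemma omega_last_le {d : ℕ} {P Q : Set (Fin d → ℝ)} :
    ∀ x ∈ OmegaPoly P Q, x (Fin.last d) ≤ 1 := by
  refine omega_le (proj_linear (Fin.last d)) ?_ ?_ <;> intro p _ <;> simp [Fin.snoc_last]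

lemma omega_last_ge {d : ℕ} {P Q : Set (Fin d → ℝ)} :
    ∀ x ∈ OmegaPoly P Q, -x (Fin.last d) ≤ 1 := by
  have hlin : IsLinearMap ℝ (fun x : Fin (d+1) → ℝ => -x (Fin.last d)) := by
    constructor <;> intros <;> simp <;> ring
  refine omega_le hlin ?_ ?_ <;> intro p _ <;> simp [Fin.snoc_last]

lemma omega_coord {d : ℕ} (G₁ G₂ : SimpleGraph (Fin d)) (v : Fin d) :
    ∀ x ∈ OmegaPoly (stablePolytope G₁) (stablePolytope G₂),
      2 * x v.castSucc - x (Fin.last d) ≤ 1 := by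
  have hlin : IsLinearMap ℝ (fun x : Fin (d+1) → ℝ => 2 * x v.castSucc - x (Fin.last d)) := by
    constructor <;> intros <;> simp <;> ring
  refine omega_le hlin ?_ ?_
  · intro p hp
    simp only [Fin.snoc_castSucc, Fin.snoc_last]
    have := sp_le_one G₁ v p hp
    linarith
  · intro q hq
    simp only [Fin.snoc_castSucc, Fin.snoc_last, Pi.neg_apply]
    have := sp_nonneg G₂ v q hq
    linarith

noncomputable def zgen (d ℓ : ℕ) (k : ℕ) : Fin (d + 1) → ℝ :=
  if k < 2 * ℓ + 1 then
    Fin.snoc (rho {v : Fin d | (v : ℕ) = k ∨ (v : ℕ) = (k + 1) % (2 * ℓ + 1)}) 1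
  else Fin.snoc (-(rho (∅ : Set (Fin d)))) (-1)

lemma zgen_last (d ℓ k : ℕ) : zgen d ℓ k (Fin.last d) = if k < 2 * ℓ + 1 then 1 else -1 := by
  unfold zgen; split_ifs <;> simp

lemma zgen_castSucc (d ℓ k : ℕ) (v : Fin d) :
    zgen d ℓ k v.castSucc =
      if k < 2 * ℓ + 1 ∧ ((v : ℕ) = k ∨ (v : ℕ) = (k + 1) % (2 * ℓ + 1)) then 1 else 0 := by
  classical
  unfold zgen
  by_cases h1 : k < 2 * ℓ + 1
  · rw [if_pos h1, Fin.snoc_castSucc]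
    by_cases h2 : (v : ℕ) = k ∨ (v : ℕ) = (k + 1) % (2 * ℓ + 1)
    · rw [if_pos ⟨h1, h2⟩]
      simp [rho, Set.indicator_apply, Set.mem_setOf_eq, h2]
    · rw [if_neg (by tauto)]
      simp [rho, Set.indicator_apply, Set.mem_setOf_eq, h2]
  · rw [if_neg h1, Fin.snoc_castSucc, if_neg (by tauto)]
    simp [rho]

lemma part1 {d ℓ : ℕ} (hℓ : 2 ≤ ℓ) (hd : 2 * ℓ + 1 ≤ d)
    (G₁ G₂ : SimpleGraph (Fin d))
    (antihole : ∀ i j : Fin d, (i : ℕ) < 2 * ℓ + 1 → (j : ℕ) < 2 * ℓ + 1 →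
      (G₁.Adj i j ↔ (i ≠ j ∧
        ¬ ((j : ℕ) = ((i : ℕ) + 1) % (2 * ℓ + 1) ∨
          (i : ℕ) = ((j : ℕ) + 1) % (2 * ℓ + 1))))) :
    (fun i : Fin (d + 1) =>
        ((if (i : ℕ) < 2 * ℓ + 1 then 1 else if i = Fin.last d then (ℓ : ℤ) else 0 : ℤ) : ℝ)) ∈
      ((ℓ : ℝ) + 1) • OmegaPoly (stablePolytope G₁) (stablePolytope G₂) := by
  classical
  have hstable : ∀ k : ℕ, k < 2*ℓ+1 →
      isStable G₁ {v : Fin d | (v : ℕ) = k ∨ (v : ℕ) = (k+1) % (2*ℓ+1)} := by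
    intro k hk i hi j hj hne
    simp only [Set.mem_setOf_eq] at hi hj
    have hmod : (k+1) % (2*ℓ+1) < 2*ℓ+1 := Nat.mod_lt _ (by omega)
    have hin : (i : ℕ) < 2*ℓ+1 := by rcases hi with h | h <;> omega
    have hjn : (j : ℕ) < 2*ℓ+1 := by rcases hj with h | h <;> omega
    rw [antihole i j hin hjn]
    rintro ⟨-, hcon⟩
    apply hcon
    rcases hi with h1 | h1 <;> rcases hj with h2 | h2
    · exact absurd (Fin.ext (h1.trans h2.symm) : i = j) hne
    · left; rw [h2, h1]
    · right; rw [h1, h2]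
    · exact absurd (Fin.ext (h1.trans h2.symm) : i = j) hne
  have hzmem : ∀ k : ℕ, zgen d ℓ k ∈
      ((fun x : Fin d → ℝ => Fin.snoc x (1:ℝ)) '' stablePolytope G₁ ∪
        (fun x : Fin d → ℝ => Fin.snoc (-x) (-1:ℝ)) '' stablePolytope G₂) := by
    intro k
    by_cases hk : k < 2*ℓ+1
    · left
      refine ⟨_, subset_convexHull ℝ _ ⟨_, hstable k hk, rfl⟩, ?_⟩
      unfold zgen; rw [if_pos hk]
    · right
      refine ⟨rho (∅ : Set (Fin d)),
        subset_convexHull ℝ _ ⟨∅, fun i hi => absurd hi (Set.notMem_empty i), rfl⟩, ?_⟩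
      unfold zgen; rw [if_neg hk]
  have hcne : (2*(ℓ:ℝ)+2) ≠ 0 := by positivity
  have hp : (∑ k ∈ Finset.range (2*ℓ+2), (2*(ℓ:ℝ)+2)⁻¹ • zgen d ℓ k) ∈
      OmegaPoly (stablePolytope G₁) (stablePolytope G₂) := by
    apply Convex.sum_mem (convex_convexHull ℝ _)
    · intro k _; positivity
    · rw [Finset.sum_const, Finset.card_range, nsmul_eq_mul]
      push_cast
      field_simp
    · intro k _; exact subset_convexHull ℝ _ (hzmem k)
  rw [Set.mem_smul_set]
  refine ⟨_, hp, ?_⟩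
  funext i
  rw [Pi.smul_apply, Finset.sum_apply]
  simp only [Pi.smul_apply, smul_eq_mul]
  rw [← Finset.mul_sum]
  induction i using Fin.lastCases with
  | last =>
      have hsum : ∑ k ∈ Finset.range (2*ℓ+2), zgen d ℓ k (Fin.last d) = 2*(ℓ:ℝ) := by
        rw [Finset.sum_range_succ,
          Finset.sum_congr rfl (fun k hk => by
            rw [zgen_last, if_pos (Finset.mem_range.mp hk)]),
          zgen_last, if_neg (by omega), Finset.sum_const, Finset.card_range, nsmul_eq_mul]
        push_cast; ring
      rw [hsum, if_neg (by simp [Fin.val_last]; omega), if_pos rfl]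
      push_cast
      field_simp
  | cast v =>
      by_cases hv : (v : ℕ) < 2*ℓ+1
      · obtain ⟨k₂, hk₂n, hk₂v, hiff⟩ :
            ∃ k₂, k₂ < 2*ℓ+1 ∧ k₂ ≠ (v:ℕ) ∧ ∀ k, k < 2*ℓ+1 →
              (((v:ℕ) = k ∨ (v:ℕ) = (k+1) % (2*ℓ+1)) ↔ (k = (v:ℕ) ∨ k = k₂)) := by
          rcases Nat.eq_zero_or_pos (v:ℕ) with h0 | h0
          · exact ⟨2*ℓ, by omega, by omega,
              fun k hk => by rw [mod_succ _ _ hk]; split_ifs <;> omega⟩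
          · exact ⟨(v:ℕ)-1, by omega, by omega,
              fun k hk => by rw [mod_succ _ _ hk]; split_ifs <;> omega⟩
        have hterm : ∀ k ∈ Finset.range (2*ℓ+1),
            zgen d ℓ k v.castSucc =
              (if k = (v:ℕ) then (1:ℝ) else 0) + (if k = k₂ then 1 else 0) := by
          intro k hk
          have hkn := Finset.mem_range.mp hk
          rw [zgen_castSucc]
          have hcond : (k < 2*ℓ+1 ∧ ((v:ℕ) = k ∨ (v:ℕ) = (k+1) % (2*ℓ+1))) ↔
              (k = (v:ℕ) ∨ k = k₂) := by
            rw [and_iff_right hkn]; exact hiff k hkn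
          rw [if_congr hcond rfl rfl]
          by_cases h1 : k = (v:ℕ) <;> by_cases h2 : k = k₂
          · exact absurd (h1.symm.trans h2) (Ne.symm hk₂v)
          · simp [h1, h2, Ne.symm hk₂v]
          · simp [h1, h2, hk₂v]
          · simp [h1, h2]
        have hsum : ∑ k ∈ Finset.range (2*ℓ+2), zgen d ℓ k v.castSucc = 2 := by
          rw [Finset.sum_range_succ, Finset.sum_congr rfl hterm, zgen_castSucc,
            if_neg (fun hcon => absurd hcon.1 (by omega))]
          rw [Finset.sum_add_distrib,
            Finset.sum_ite_eq' _ ((v:ℕ)) (fun _ => (1:ℝ)),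
            Finset.sum_ite_eq' _ k₂ (fun _ => (1:ℝ)),
            if_pos (Finset.mem_range.mpr hv), if_pos (Finset.mem_range.mpr hk₂n)]
          ring
        rw [hsum, if_pos (show ((v.castSucc : Fin (d+1)) : ℕ) < 2*ℓ+1 by simpa using hv)]
        push_cast
        field_simp
      · have hsum : ∑ k ∈ Finset.range (2*ℓ+2), zgen d ℓ k v.castSucc = 0 := by
          apply Finset.sum_eq_zero
          intro k _
          rw [zgen_castSucc, if_neg]
          rintro ⟨hk1, (h | h)⟩
          · omega
          · have := Nat.mod_lt (k+1) (y := 2*ℓ+1) (by omega)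
            omega
        rw [hsum, if_neg (show ¬ ((v.castSucc : Fin (d+1)) : ℕ) < 2*ℓ+1 by simpa using hv),
          if_neg (by exact (Fin.castSucc_lt_last v).ne)]
        simp

lemma omega_Csum {d ℓ : ℕ} (hℓ : 2 ≤ ℓ) (hd : 2 * ℓ + 1 ≤ d)
    (G₁ G₂ : SimpleGraph (Fin d))
    (antihole : ∀ i j : Fin d, (i : ℕ) < 2 * ℓ + 1 → (j : ℕ) < 2 * ℓ + 1 →
      (G₁.Adj i j ↔ (i ≠ j ∧
        ¬ ((j : ℕ) = ((i : ℕ) + 1) % (2 * ℓ + 1) ∨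
          (i : ℕ) = ((j : ℕ) + 1) % (2 * ℓ + 1))))) :
    ∀ x ∈ OmegaPoly (stablePolytope G₁) (stablePolytope G₂),
      (∑ j : Fin (2 * ℓ + 1), x (Fin.castLE hd j).castSucc) - x (Fin.last d) ≤ 1 := by
  have hlin : IsLinearMap ℝ (fun x : Fin (d+1) → ℝ =>
      (∑ j : Fin (2 * ℓ + 1), x (Fin.castLE hd j).castSucc) - x (Fin.last d)) := by
    refine ⟨fun a b => ?_, fun c a => ?_⟩
    · simp only [Pi.add_apply, Finset.sum_add_distrib]; ring
    · simp only [Pi.smul_apply, smul_eq_mul, ← Finset.mul_sum]; ring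
  refine omega_le hlin ?_ ?_
  · intro p hp
    simp only [Fin.snoc_castSucc, Fin.snoc_last]
    have := sp_Csum hℓ hd G₁ antihole p hp
    linarith
  · intro q hq
    simp only [Fin.snoc_castSucc, Fin.snoc_last, Pi.neg_apply]
    have h1 : (0:ℝ) ≤ ∑ j : Fin (2 * ℓ + 1), q (Fin.castLE hd j) :=
      Finset.sum_nonneg fun j _ => sp_nonneg G₂ _ q hq
    have h2 : ∑ j : Fin (2 * ℓ + 1), -q (Fin.castLE hd j) =
        -∑ j : Fin (2 * ℓ + 1), q (Fin.castLE hd j) := by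
      rw [Finset.sum_neg_distrib]
    rw [h2]; linarith

lemma part2 {d ℓ : ℕ} (hℓ : 2 ≤ ℓ) (hd : 2 * ℓ + 1 ≤ d)
    (G₁ G₂ : SimpleGraph (Fin d))
    (antihole : ∀ i j : Fin d, (i : ℕ) < 2 * ℓ + 1 → (j : ℕ) < 2 * ℓ + 1 →
      (G₁.Adj i j ↔ (i ≠ j ∧
        ¬ ((j : ℕ) = ((i : ℕ) + 1) % (2 * ℓ + 1) ∨
          (i : ℕ) = ((j : ℕ) + 1) % (2 * ℓ + 1))))) :
    ¬ (∃ b : Fin (ℓ + 1) → Fin (d + 1) → ℤ,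
        (∀ k, (fun i => (b k i : ℝ)) ∈ OmegaPoly (stablePolytope G₁) (stablePolytope G₂)) ∧
        ∀ i : Fin (d + 1), ∑ k, b k i =
          (if (i : ℕ) < 2 * ℓ + 1 then 1 else if i = Fin.last d then (ℓ : ℤ) else 0 : ℤ)) := by
  classical
  rintro ⟨b, hmem, hsum⟩
  -- integer bounds
  have c1 : ∀ k : Fin (ℓ+1), b k (Fin.last d) ≤ 1 := by
    intro k
    have h := omega_last_le _ (hmem k)
    exact_mod_cast h
  have c3 : ∀ (k : Fin (ℓ+1)) (v : Fin d), 2 * b k v.castSucc ≤ b k (Fin.last d) + 1 := by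
    intro k v
    have h := omega_coord G₁ G₂ v _ (hmem k)
    have h' : (2 * b k v.castSucc : ℝ) ≤ (b k (Fin.last d) : ℝ) + 1 := by
      push_cast at h ⊢; linarith
    exact_mod_cast h'
  have c4 : ∀ k : Fin (ℓ+1),
      (∑ j : Fin (2*ℓ+1), b k (Fin.castLE hd j).castSucc) ≤ b k (Fin.last d) + 1 := by
    intro k
    have h := omega_Csum hℓ hd G₁ G₂ antihole _ (hmem k)
    have h' : ((∑ j : Fin (2*ℓ+1), b k (Fin.castLE hd j).castSucc : ℤ) : ℝ) ≤
        ((b k (Fin.last d) + 1 : ℤ) : ℝ) := by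
      push_cast at h ⊢; linarith
    exact_mod_cast h'
  -- sum facts
  have hlast : ∑ k, b k (Fin.last d) = (ℓ : ℤ) := by
    have h := hsum (Fin.last d)
    rwa [if_neg (by simp [Fin.val_last]; omega), if_pos rfl] at h
  have hCsum : ∑ k : Fin (ℓ+1), (∑ j : Fin (2*ℓ+1), b k (Fin.castLE hd j).castSucc)
      = (2*ℓ+1 : ℤ) := by
    rw [Finset.sum_comm]
    have h1 : ∀ j : Fin (2*ℓ+1), ∑ k, b k (Fin.castLE hd j).castSucc = 1 := by
      intro j
      have h := hsum (Fin.castLE hd j).castSucc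
      rwa [if_pos (by simpa using j.isLt)] at h
    rw [Finset.sum_congr rfl fun j _ => h1 j]
    simp [Finset.card_univ]
  -- find k0 with last coordinate ≤ 0
  have hex : ∃ k0 : Fin (ℓ+1), b k0 (Fin.last d) ≤ 0 := by
    by_contra h
    push_neg at h
    have h1 : ∀ k ∈ (Finset.univ : Finset (Fin (ℓ+1))), (1:ℤ) ≤ b k (Fin.last d) := by
      intro k _; have := h k; omega
    have h2 := Finset.card_nsmul_le_sum Finset.univ (fun k => b k (Fin.last d)) 1 h1
    rw [Finset.card_univ, Fintype.card_fin, hlast, nsmul_eq_mul, mul_one] at h2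
    omega
  obtain ⟨k0, hk0⟩ := hex
  have hmemk0 := Finset.mem_univ k0
  have heq1 := Finset.sum_erase_add Finset.univ (fun k => b k (Fin.last d)) hmemk0
  have heq2 := Finset.sum_erase_add Finset.univ
    (fun k => ∑ j : Fin (2*ℓ+1), b k (Fin.castLE hd j).castSucc) hmemk0
  have hcard : (Finset.univ.erase k0).card = ℓ := by
    rw [Finset.card_erase_of_mem hmemk0, Finset.card_univ, Fintype.card_fin]
    omega
  have hupper : ∑ k ∈ Finset.univ.erase k0, b k (Fin.last d) ≤ (ℓ:ℤ) := by
    have h := Finset.sum_le_card_nsmul (Finset.univ.erase k0)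
      (fun k => b k (Fin.last d)) 1 (fun k _ => c1 k)
    rw [hcard] at h
    simpa [nsmul_eq_mul] using h
  have heq1' : (∑ k ∈ Finset.univ.erase k0, b k (Fin.last d)) + b k0 (Fin.last d) = (ℓ:ℤ) := by
    simpa [hlast] using heq1
  have heq2' : (∑ k ∈ Finset.univ.erase k0, ∑ j : Fin (2*ℓ+1), b k (Fin.castLE hd j).castSucc)
      + (∑ j : Fin (2*ℓ+1), b k0 (Fin.castLE hd j).castSucc) = (2*ℓ+1:ℤ) := by
    exact heq2.trans hCsum
  have hk0' : b k0 (Fin.last d) = 0 := by linarith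
  have hSk0 : (∑ j : Fin (2*ℓ+1), b k0 (Fin.castLE hd j).castSucc) ≤ 0 := by
    apply Finset.sum_nonpos
    intro j _
    have h := c3 k0 (Fin.castLE hd j)
    rw [hk0'] at h
    by_contra hcon
    push_neg at hcon
    omega
  have hb1 : ∑ k ∈ Finset.univ.erase k0, (∑ j : Fin (2*ℓ+1), b k (Fin.castLE hd j).castSucc)
      ≤ ∑ k ∈ Finset.univ.erase k0, (b k (Fin.last d) + 1) :=
    Finset.sum_le_sum fun k _ => c4 k
  have hb2 : ∑ k ∈ Finset.univ.erase k0, (b k (Fin.last d) + 1)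
      = (∑ k ∈ Finset.univ.erase k0, b k (Fin.last d)) + ℓ := by
    rw [Finset.sum_add_distrib, Finset.sum_const, hcard]
    simp [nsmul_eq_mul]
  have : (2*ℓ+1 : ℤ) ≤ 2*ℓ := by linarith
  omega

end Stmt10Aux

/-- If `G₁` contains an odd antihole (an induced subgraph on the first `2ℓ+1`
vertices whose complement is an odd cycle of length `2ℓ+1 ≥ 5`), then
`Ω(𝒬_{G₁}, 𝒬_{G₂})` does not possess the integer decomposition property: the
point `b = e₁ + ⋯ + e_{2ℓ+1} + ℓ·e_{d+1}` lies in
`(ℓ+1)·Ω(𝒬_{G₁}, 𝒬_{G₂}) ∩ ℤ^{d+1}` but is not a sum of `ℓ+1` lattice points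
of `Ω(𝒬_{G₁}, 𝒬_{G₂})`. -/
theorem stmt_10 {d ℓ : ℕ} (hℓ : 2 ≤ ℓ) (hd : 2 * ℓ + 1 ≤ d)
    (G₁ G₂ : SimpleGraph (Fin d))
    (antihole : ∀ i j : Fin d, (i : ℕ) < 2 * ℓ + 1 → (j : ℕ) < 2 * ℓ + 1 →
      (G₁.Adj i j ↔ (i ≠ j ∧
        ¬ ((j : ℕ) = ((i : ℕ) + 1) % (2 * ℓ + 1) ∨
          (i : ℕ) = ((j : ℕ) + 1) % (2 * ℓ + 1))))) :
    (fun i : Fin (d + 1) =>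
        ((if (i : ℕ) < 2 * ℓ + 1 then 1 else if i = Fin.last d then (ℓ : ℤ) else 0 : ℤ) : ℝ)) ∈
        ((ℓ : ℝ) + 1) • OmegaPoly (stablePolytope G₁) (stablePolytope G₂) ∧
    ¬ (∃ b : Fin (ℓ + 1) → Fin (d + 1) → ℤ,
        (∀ k, (fun i => (b k i : ℝ)) ∈ OmegaPoly (stablePolytope G₁) (stablePolytope G₂)) ∧
        ∀ i : Fin (d + 1), ∑ k, b k i =
          (if (i : ℕ) < 2 * ℓ + 1 then 1 else if i = Fin.last d then (ℓ : ℤ) else 0 : ℤ)) ∧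
    ¬ hasIDP (OmegaPoly (stablePolytope G₁) (stablePolytope G₂)) := by
  have h1 := Stmt10Aux.part1 hℓ hd G₁ G₂ antihole
  have h2 := Stmt10Aux.part2 hℓ hd G₁ G₂ antihole
  refine ⟨h1, h2, ?_⟩
  intro hIDP
  obtain ⟨bb, hb1, hb2⟩ := hIDP (ℓ + 1) (by omega)
    (fun i : Fin (d + 1) =>
      (if (i : ℕ) < 2 * ℓ + 1 then 1 else if i = Fin.last d then (ℓ : ℤ) else 0))
    (by
      have hc : ((ℓ + 1 : ℕ) : ℝ) = (ℓ : ℝ) + 1 := by push_cast; ring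
      rw [hc]
      exact h1)
  exact h2 ⟨bb, hb1, hb2⟩
end

section
/- The complement of a perfect graph is perfect (the weak perfect graph theorem): if G is a finite simple graph such that every induced subgraph of G has chromatic number equal to its clique number, then the complementary graph of G has the same property. -/
/-- The clique number of a graph: the largest size of a clique. -/
noncomputable def cliqueNumber {V : Type*} (G : SimpleGraph V) : ℕ :=
  sSup {n | ∃ t : Finset V, G.IsNClique n t}

/-- A graph is perfect if every induced subgraph (including the graph itself)
has chromatic number equal to its clique number. -/
def isPerfect {V : Type*} (G : SimpleGraph V) : Prop :=
  ∀ s : Set V, (G.induce s).chromaticNumber = (cliqueNumber (G.induce s) : ℕ∞)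

open SimpleGraph Finset

section WPGTAux

variable {V : Type*} {W : Type*}




lemma WPGT.cliqueNum_bddAbove [Fintype V] (G : SimpleGraph V) :
    BddAbove {n | ∃ s, G.IsNClique n s} := by
  use Fintype.card V
  rintro y ⟨s, syc⟩
  rw [SimpleGraph.isNClique_iff] at syc
  rw [← syc.right]
  exact Finset.card_le_card (Finset.subset_univ s)

lemma WPGT.cliqueNum_nonempty (G : SimpleGraph V) :
    {n | ∃ s, G.IsNClique n s}.Nonempty :=
  ⟨0, ∅, by simp⟩

lemma WPGT.one_le_cliqueNum [Fintype V] [Nonempty V] (G : SimpleGraph V) :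
    1 ≤ G.cliqueNum := by
  obtain ⟨v⟩ := ‹Nonempty V›
  exact le_csSup (WPGT.cliqueNum_bddAbove G) ⟨{v}, by simp⟩

lemma WPGT.isNClique_of_embedding {G : SimpleGraph V} {H : SimpleGraph W}
    (f : G ↪g H) {n : ℕ} {s : Finset V} (h : G.IsNClique n s) :
    H.IsNClique n (s.map f.toEmbedding) := by
  constructor
  · rw [Finset.coe_map]
    rintro _ ⟨x, hx, rfl⟩ _ ⟨y, hy, rfl⟩ hne
    exact f.map_rel_iff.mpr (h.1 hx hy (fun hc => hne (by rw [hc])))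
  · rw [Finset.card_map]; exact h.2

lemma WPGT.cliqueNum_le_of_embedding [Fintype W] {G : SimpleGraph V} {H : SimpleGraph W}
    (f : G ↪g H) : G.cliqueNum ≤ H.cliqueNum := by
  apply csSup_le (WPGT.cliqueNum_nonempty G)
  rintro n ⟨s, hs⟩
  have h2 := WPGT.isNClique_of_embedding f hs
  have := SimpleGraph.IsClique.card_le_cliqueNum (G := H) (tc := h2.1)
  rwa [h2.2] at this

lemma WPGT.cliqueNum_eq_of_iso [Fintype V] [Fintype W] {G : SimpleGraph V} {H : SimpleGraph W}
    (e : G ≃g H) : G.cliqueNum = H.cliqueNum :=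
  le_antisymm (WPGT.cliqueNum_le_of_embedding e.toEmbedding)
    (WPGT.cliqueNum_le_of_embedding e.symm.toEmbedding)

lemma WPGT.colorable_iff_of_iso {G : SimpleGraph V} {H : SimpleGraph W} (e : G ≃g H) {n : ℕ} :
    G.Colorable n ↔ H.Colorable n :=
  ⟨fun h => Colorable.of_hom e.symm.toEmbedding.toHom h, fun h => Colorable.of_hom e.toEmbedding.toHom h⟩

/-- complement of iso -/
def WPGT.complIso {G : SimpleGraph V} {H : SimpleGraph W} (e : G ≃g H) : Gᶜ ≃g Hᶜ where
  toEquiv := e.toEquiv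
  map_rel_iff' := by
    intro a b
    simp only [compl_adj]
    rw [show H.Adj (e.toEquiv a) (e.toEquiv b) ↔ G.Adj a b from e.map_rel_iff]
    constructor
    · rintro ⟨h1, h2⟩; exact ⟨fun hc => h1 (by rw [hc]), h2⟩
    · rintro ⟨h1, h2⟩; exact ⟨fun hc => h1 (e.toEquiv.injective hc), h2⟩

lemma WPGT.induce_compl_eq (G : SimpleGraph V) (s : Set V) :
    (Gᶜ).induce s = (G.induce s)ᶜ := by
  ext a b
  simp only [comap_adj, Function.Embedding.coe_subtype, compl_adj]
  constructor
  · rintro ⟨h1, h2⟩; exact ⟨fun hc => h1 (by rw [hc]), h2⟩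
  · rintro ⟨h1, h2⟩; exact ⟨fun hc => h1 (Subtype.coe_injective hc), h2⟩

/-- induce of induce is isomorphic to induce of the image -/
noncomputable def WPGT.induceInduceIso (G : SimpleGraph V) (s : Set V) (t : Set ↥s) :
    (G.induce s).induce t ≃g G.induce (Subtype.val '' t) where
  toEquiv := Equiv.Set.image Subtype.val t Subtype.coe_injective
  map_rel_iff' := by
    intro a b
    simp [Equiv.Set.image, Equiv.Set.imageOfInjOn]

lemma WPGT.chromaticNumber_eq_of_colorable [Fintype V] {G : SimpleGraph V}
    (h : G.Colorable G.cliqueNum) : G.chromaticNumber = (G.cliqueNum : ℕ∞) := by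
  apply le_antisymm h.chromaticNumber_le
  obtain ⟨s, hs⟩ := G.exists_isNClique_cliqueNum
  have := hs.1.card_le_chromaticNumber
  rwa [hs.2] at this


/-- easy direction: if χ = ω then n ≤ ω * α -/
lemma WPGT.card_le_mul [Fintype V] (G : SimpleGraph V)
    (h : G.chromaticNumber = (G.cliqueNum : ℕ∞)) :
    Nat.card V ≤ G.cliqueNum * Gᶜ.cliqueNum := by
  classical
  have hcol : G.Colorable G.cliqueNum := chromaticNumber_le_iff_colorable.mp h.le
  obtain ⟨C⟩ := hcol
  have hcard : (univ : Finset V).card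
      = ∑ j : Fin G.cliqueNum, (univ.filter (fun x => C x = j)).card :=
    Finset.card_eq_sum_card_fiberwise (fun x _ => Finset.mem_univ (C x))
  rw [Nat.card_eq_fintype_card, ← Finset.card_univ, hcard]
  calc ∑ j : Fin G.cliqueNum, (univ.filter (fun x => C x = j)).card
      ≤ ∑ _j : Fin G.cliqueNum, Gᶜ.cliqueNum := by
        apply Finset.sum_le_sum
        intro j _
        have hst : Gᶜ.IsClique (univ.filter (fun x => C x = j) : Finset V) := by
          intro x hx y hy hne
          simp only [Finset.coe_filter, Set.mem_setOf_eq] at hx hy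
          refine ⟨hne, fun hadj => C.valid hadj ?_⟩
          rw [hx.2, hy.2]
        exact SimpleGraph.IsClique.card_le_cliqueNum (tc := hst)
    _ = G.cliqueNum * Gᶜ.cliqueNum := by
        rw [Finset.sum_const, Finset.card_univ, Fintype.card_fin, smul_eq_mul]

/-- extend a coloring of G minus a stable set by one new color -/
lemma WPGT.colorable_succ (G : SimpleGraph V) (S : Finset V) (hS : Gᶜ.IsClique ↑S) {k : ℕ}
    (h : (G.induce {x | x ∉ S}).Colorable k) : G.Colorable (k + 1) := by
  classical
  obtain ⟨C⟩ := h
  refine ⟨SimpleGraph.Coloring.mk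
    (fun x => if hx : x ∈ S then Fin.last k else (C ⟨x, hx⟩).castSucc) ?_⟩
  intro x y hadj
  by_cases hx : x ∈ S <;> by_cases hy : y ∈ S
  · exact absurd hadj (hS hx hy hadj.ne).2
  · simp only [dif_pos hx, dif_neg hy]
    exact fun hc => (Fin.castSucc_lt_last (C ⟨y, hy⟩)).ne' hc
  · simp only [dif_pos hy, dif_neg hx]
    exact fun hc => (Fin.castSucc_lt_last (C ⟨x, hx⟩)).ne hc
  · simp only [dif_neg hx, dif_neg hy]
    intro hc
    exact C.valid (by exact hadj) (Fin.castSucc_injective _ hc)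

/-- injective map from an ω-clique to ω colors hits every color exactly once -/
lemma WPGT.exists_unique_fiber {K : Finset V} {m : ℕ} (hK : K.card = m) (g : V → Fin m)
    (hinj : ∀ x ∈ K, ∀ y ∈ K, g x = g y → x = y) (j : Fin m) :
    ∃! x, x ∈ K ∧ g x = j := by
  have hsurj := Finset.surj_on_of_inj_on_of_card_le (s := K) (t := Finset.univ)
    (fun a _ => g a) (fun a _ => Finset.mem_univ _)
    (fun a₁ a₂ h₁ h₂ hh => hinj a₁ h₁ a₂ h₂ hh)
    (by rw [hK]; simp)
  obtain ⟨x, hx, hgx⟩ := hsurj j (Finset.mem_univ j)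
  exact ⟨x, ⟨hx, hgx.symm⟩, fun y ⟨hy, hgy⟩ => hinj y hy x hx (by rw [hgy, hgx])⟩
theorem WPGT.core (n : ℕ) : ∀ (V : Type) [Fintype V] [DecidableEq V] (G : SimpleGraph V),
    Fintype.card V = n →
    (∀ s : Set V, Nat.card s ≤ (G.induce s).cliqueNum * ((G.induce s)ᶜ).cliqueNum) →
    G.Colorable G.cliqueNum := by
  induction n using Nat.strong_induction_on with
  | _ n IH =>
  intro V _ _ G hcard hyp
  classical
  by_contra hcon
  have hnonempty : Nonempty V := by
    by_contra h
    rw [not_nonempty_iff] at h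
    exact hcon ⟨SimpleGraph.Coloring.mk (fun v => isEmptyElim v) (fun {v w} _ => isEmptyElim v)⟩
  have hω1 : 1 ≤ G.cliqueNum := WPGT.one_le_cliqueNum G
  have hα1 : 1 ≤ Gᶜ.cliqueNum := WPGT.one_le_cliqueNum Gᶜ
  -- induction hypothesis applied to proper induced subgraphs
  have IHind : ∀ s : Set V, s ≠ Set.univ → (G.induce s).Colorable (G.induce s).cliqueNum := by
    intro s hs
    haveI : Fintype ↥s := Set.Finite.fintype (Set.toFinite s)
    obtain ⟨w, hw⟩ : ∃ w, w ∉ s := by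
      by_contra h; push_neg at h; exact hs (Set.eq_univ_of_forall h)
    have hlt : Fintype.card ↥s < n := by
      rw [← hcard]
      exact Fintype.card_lt_of_injective_of_notMem Subtype.val Subtype.coe_injective
        (by simpa using hw)
    apply IH _ hlt ↥s (G.induce s) rfl
    intro t
    have e1 := WPGT.induceInduceIso G s t
    haveI : Fintype ↥(Subtype.val '' t) := Set.Finite.fintype (Set.toFinite _)
    haveI : Fintype ↥t := Set.Finite.fintype (Set.toFinite t)
    have hc1 : ((G.induce s).induce t).cliqueNum = (G.induce (Subtype.val '' t)).cliqueNum :=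
      WPGT.cliqueNum_eq_of_iso e1
    have hc2 : (((G.induce s).induce t)ᶜ).cliqueNum
        = ((G.induce (Subtype.val '' t))ᶜ).cliqueNum :=
      WPGT.cliqueNum_eq_of_iso (WPGT.complIso e1)
    have hcard' : Nat.card ↥t = Nat.card ↥(Subtype.val '' t) :=
      Nat.card_congr (Equiv.Set.image _ _ Subtype.coe_injective)
    rw [hc1, hc2, hcard']
    exact hyp _
  -- every stable set misses some maximum clique
  have key : ∀ S : Finset V, Gᶜ.IsClique ↑S →
      ∃ K : Finset V, G.IsNClique G.cliqueNum K ∧ ∀ x ∈ K, x ∉ S := by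
    intro S hS
    rcases Finset.eq_empty_or_nonempty S with rfl | hSne
    · obtain ⟨K, hK⟩ := G.exists_isNClique_cliqueNum
      exact ⟨K, hK, fun x _ => Finset.notMem_empty x⟩
    by_contra hno
    push_neg at hno
    have hsne : {x | x ∉ S} ≠ Set.univ := by
      obtain ⟨w, hw⟩ := hSne
      intro h
      have : w ∈ {x | x ∉ S} := h ▸ Set.mem_univ w
      exact this hw
    have hcol := IHind _ hsne
    haveI : Fintype ↥{x | x ∉ S} := Set.Finite.fintype (Set.toFinite _)
    have hlt : (G.induce {x | x ∉ S}).cliqueNum < G.cliqueNum := by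
      rcases lt_or_ge (G.induce {x | x ∉ S}).cliqueNum G.cliqueNum with h | h
      · exact h
      exfalso
      obtain ⟨K, hK⟩ := (G.induce {x | x ∉ S}).exists_isNClique_cliqueNum
      obtain ⟨K', hK'sub, hK'card⟩ := Finset.exists_subset_card_eq (hK.2 ▸ h)
      have hK'cl : (G.induce {x | x ∉ S}).IsNClique G.cliqueNum K' :=
        ⟨hK.1.subset (Finset.coe_subset.mpr hK'sub), hK'card⟩
      have hK'' := WPGT.isNClique_of_embedding (SimpleGraph.Embedding.induce _) hK'cl
      obtain ⟨x, hxK, hxS⟩ := hno _ hK''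
      obtain ⟨y, _, rfl⟩ := Finset.mem_map.mp hxK
      exact y.2 hxS
    exact hcon ((WPGT.colorable_succ G S hS hcol).mono hlt)
  -- maximum stable set and its enumeration
  obtain ⟨S₀, hS₀⟩ := Gᶜ.exists_isNClique_cliqueNum
  have hS₀card : Fintype.card ↥S₀ = Gᶜ.cliqueNum := by rw [Fintype.card_coe, hS₀.2]
  let e : Fin Gᶜ.cliqueNum ≃ ↥S₀ := (Fintype.equivFinOfCardEq hS₀card).symm
  let v : Fin Gᶜ.cliqueNum → V := fun i => (e i : V)
  have hv_mem : ∀ i, v i ∈ S₀ := fun i => (e i).2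
  have hv_inj : Function.Injective v := fun i j h => e.injective (Subtype.ext h)
  -- colorings of G minus one vertex of the stable set
  have hdel : ∀ i : Fin Gᶜ.cliqueNum, ∃ c : V → Fin G.cliqueNum,
      ∀ x y, x ≠ v i → y ≠ v i → G.Adj x y → c x ≠ c y := by
    intro i
    have hsne : {x | x ≠ v i} ≠ Set.univ := by
      intro h
      have : v i ∈ {x | x ≠ v i} := h ▸ Set.mem_univ _
      exact this rfl
    haveI : Fintype ↥{x | x ≠ v i} := Set.Finite.fintype (Set.toFinite _)
    have hcol := (IHind _ hsne).mono
      (WPGT.cliqueNum_le_of_embedding (SimpleGraph.Embedding.induce _))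
    obtain ⟨C⟩ := hcol
    refine ⟨fun x => if hx : x ∈ {x | x ≠ v i} then C ⟨x, hx⟩ else ⟨0, hω1⟩, ?_⟩
    intro x y hx hy hadj
    have hxs : x ∈ {x | x ≠ v i} := hx
    have hys : y ∈ {x | x ≠ v i} := hy
    simp only [dif_pos hxs, dif_pos hys]
    exact C.valid hadj
  choose c hc using hdel
  -- the family of αω+1 stable sets
  let Stab : Option (Fin Gᶜ.cliqueNum × Fin G.cliqueNum) → Finset V := fun t =>
    t.elim S₀ (fun p => univ.filter (fun x => x ≠ v p.1 ∧ c p.1 x = p.2))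
  have hStab_stable : ∀ t, Gᶜ.IsClique ↑(Stab t) := by
    rintro (_ | ⟨i, j⟩)
    · exact hS₀.1
    · intro x hx y hy hne
      obtain ⟨-, hx1, hx2⟩ := Finset.mem_filter.mp (Finset.mem_coe.mp hx)
      obtain ⟨-, hy1, hy2⟩ := Finset.mem_filter.mp (Finset.mem_coe.mp hy)
      exact ⟨hne, fun hadj => hc i x y hx1 hy1 hadj (by rw [hx2, hy2])⟩
  -- the cliques avoiding each stable set
  have hKex : ∀ t, ∃ K, G.IsNClique G.cliqueNum K ∧ ∀ x ∈ K, x ∉ Stab t :=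
    fun t => key (Stab t) (hStab_stable t)
  choose K hKcl hKdisj using hKex
  -- a clique meets a stable set at most once
  have hle1 : ∀ t u, (K t ∩ Stab u).card ≤ 1 := by
    intro t u
    rw [Finset.card_le_one]
    intro x hx y hy
    rw [Finset.mem_inter] at hx hy
    by_contra hne
    exact ((hStab_stable u) (Finset.mem_coe.mpr hx.2) (Finset.mem_coe.mpr hy.2) hne).2
      ((hKcl t).1 (Finset.mem_coe.mpr hx.1) (Finset.mem_coe.mpr hy.1) hne)
  -- a maximum clique avoiding v i meets every color class of c i
  have hrow : ∀ (i : Fin Gᶜ.cliqueNum) (t : Option (Fin Gᶜ.cliqueNum × Fin G.cliqueNum)),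
      v i ∉ K t → ∀ j, ∃ x, x ∈ K t ∧ x ≠ v i ∧ c i x = j := by
    intro i t hvi j
    have hinj : ∀ x ∈ K t, ∀ y ∈ K t, c i x = c i y → x = y := by
      intro x hx y hy hxy
      by_contra hne
      have hadj := (hKcl t).1 (Finset.mem_coe.mpr hx) (Finset.mem_coe.mpr hy) hne
      exact hc i x y (fun h => hvi (h ▸ hx)) (fun h => hvi (h ▸ hy)) hadj hxy
    obtain ⟨x, ⟨hxK, hxj⟩, -⟩ := WPGT.exists_unique_fiber (hKcl t).2 (c i) hinj j
    exact ⟨x, hxK, fun h => hvi (h ▸ hxK), hxj⟩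
  -- the key counting identity
  have hcount : ∀ t u, (K t ∩ Stab u).card = if u = t then 0 else 1 := by
    have hone : ∀ t u, (K t ∩ Stab u).Nonempty → (K t ∩ Stab u).card = 1 :=
      fun t u hne => le_antisymm (hle1 t u) (Finset.card_pos.mpr hne)
    intro t u
    by_cases hut : u = t
    · subst hut
      rw [if_pos rfl, Finset.card_eq_zero, Finset.eq_empty_iff_forall_notMem]
      intro x hx
      rw [Finset.mem_inter] at hx
      exact hKdisj u x hx.1 hx.2
    rw [if_neg hut]
    rcases t with _ | ⟨i, j⟩
    · rcases u with _ | ⟨i', j'⟩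
      · exact absurd rfl hut
      · have hvi : v i' ∉ K none := fun h => hKdisj none _ h (hv_mem i')
        obtain ⟨x, hxK, hxne, hxc⟩ := hrow i' none hvi j'
        exact hone _ _ ⟨x, Finset.mem_inter.mpr ⟨hxK,
          Finset.mem_filter.mpr ⟨Finset.mem_univ x, hxne, hxc⟩⟩⟩
    · have hvi : v i ∈ K (some (i, j)) := by
        by_contra h
        obtain ⟨x, hxK, hxne, hxc⟩ := hrow i _ h j
        exact hKdisj _ x hxK (Finset.mem_filter.mpr ⟨Finset.mem_univ x, hxne, hxc⟩)
      rcases u with _ | ⟨i', j'⟩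
      · exact hone _ _ ⟨v i, Finset.mem_inter.mpr ⟨hvi, hv_mem i⟩⟩
      · by_cases hii : i' = i
        · subst hii
          have hjj : j' ≠ j := fun h => hut (by rw [h])
          have hinj : ∀ x ∈ K (some (i', j)), ∀ y ∈ K (some (i', j)),
              (if x = v i' then j else c i' x) = (if y = v i' then j else c i' y) → x = y := by
            intro x hx y hy hxy
            by_contra hne
            have hadj := (hKcl _).1 (Finset.mem_coe.mpr hx) (Finset.mem_coe.mpr hy) hne
            by_cases hxv : x = v i'
            · have hyv : y ≠ v i' := fun h => hne (by rw [hxv, h])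
              rw [if_pos hxv, if_neg hyv] at hxy
              exact hKdisj (some (i', j)) y hy
                (Finset.mem_filter.mpr ⟨Finset.mem_univ y, hyv, hxy.symm⟩)
            · by_cases hyv : y = v i'
              · rw [if_neg hxv, if_pos hyv] at hxy
                exact hKdisj (some (i', j)) x hx
                  (Finset.mem_filter.mpr ⟨Finset.mem_univ x, hxv, hxy⟩)
              · rw [if_neg hxv, if_neg hyv] at hxy
                exact hc i' x y hxv hyv hadj hxy
          obtain ⟨x, ⟨hxK, hxg⟩, -⟩ := WPGT.exists_unique_fiber (hKcl (some (i', j))).2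
            (fun x => if x = v i' then j else c i' x) hinj j'
          have hxv : x ≠ v i' := by
            intro h
            rw [if_pos h] at hxg
            exact hjj hxg.symm
          rw [if_neg hxv] at hxg
          exact hone _ _ ⟨x, Finset.mem_inter.mpr ⟨hxK,
            Finset.mem_filter.mpr ⟨Finset.mem_univ x, hxv, hxg⟩⟩⟩
        · have hvi' : v i' ∉ K (some (i, j)) := by
            intro h
            have h1 : v i ∈ K (some (i, j)) ∩ S₀ := Finset.mem_inter.mpr ⟨hvi, hv_mem i⟩
            have h2 : v i' ∈ K (some (i, j)) ∩ S₀ := Finset.mem_inter.mpr ⟨h, hv_mem i'⟩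
            have h3 := hle1 (some (i, j)) none
            rw [Finset.card_le_one] at h3
            exact hii (hv_inj (h3 _ h2 _ h1))
          obtain ⟨x, hxK, hxne, hxc⟩ := hrow i' _ hvi' j'
          exact hone _ _ ⟨x, Finset.mem_inter.mpr ⟨hxK,
            Finset.mem_filter.mpr ⟨Finset.mem_univ x, hxne, hxc⟩⟩⟩
  -- indicator vectors
  let a : Option (Fin Gᶜ.cliqueNum × Fin G.cliqueNum) → (V → ℚ) :=
    fun t x => if x ∈ K t then 1 else 0
  let b : Option (Fin Gᶜ.cliqueNum × Fin G.cliqueNum) → (V → ℚ) :=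
    fun u x => if x ∈ Stab u then 1 else 0
  have hdot : ∀ t u, (∑ x : V, a t x * b u x) = ((K t ∩ Stab u).card : ℚ) := by
    intro t u
    have h1 : ∀ x : V, a t x * b u x = if x ∈ K t ∩ Stab u then (1 : ℚ) else 0 := by
      intro x
      by_cases h1 : x ∈ K t <;> by_cases h2 : x ∈ Stab u <;>
        simp [a, b, h1, h2, Finset.mem_inter]
    rw [Finset.sum_congr rfl (fun x _ => h1 x), Finset.sum_ite_mem, Finset.univ_inter,
      Finset.sum_const, nsmul_eq_mul, mul_one]
  have hlin : LinearIndependent ℚ a := by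
    rw [Fintype.linearIndependent_iff]
    intro gg hgg
    have hsum : ∀ u, ∑ t, gg t * ((K t ∩ Stab u).card : ℚ) = 0 := by
      intro u
      have h2 : ∀ t, gg t * ((K t ∩ Stab u).card : ℚ) = ∑ x : V, gg t * (a t x * b u x) := by
        intro t; rw [← Finset.mul_sum, hdot]
      rw [Finset.sum_congr rfl (fun t _ => h2 t), Finset.sum_comm]
      have h3 : ∀ x : V, ∑ t, gg t * (a t x * b u x) = (∑ t, gg t * a t x) * b u x := by
        intro x; rw [Finset.sum_mul]; exact Finset.sum_congr rfl (fun t _ => by ring)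
      rw [Finset.sum_congr rfl (fun x _ => h3 x)]
      have h4 : ∀ x : V, (∑ t, gg t * a t x) = 0 := by
        intro x
        have h5 := congrFun hgg x
        simpa [Finset.sum_apply] using h5
      rw [Finset.sum_congr rfl (fun x _ => by rw [h4 x, zero_mul])]
      simp
    have hsum2 : ∀ u, (∑ t, gg t) - gg u = 0 := by
      intro u
      have h5 : ∀ t, gg t * ((K t ∩ Stab u).card : ℚ)
          = gg t - (if u = t then gg t else 0) := by
        intro t
        rw [hcount t u]
        by_cases h : u = t <;> simp [h]
      have h6 := hsum u
      rw [Finset.sum_congr rfl (fun t _ => h5 t), Finset.sum_sub_distrib,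
        Finset.sum_ite_eq] at h6
      simpa using h6
    have hC : ∀ u, gg u = ∑ t, gg t := fun u => by have := hsum2 u; linarith
    have hcardI : (2 : ℕ) ≤ Fintype.card (Option (Fin Gᶜ.cliqueNum × Fin G.cliqueNum)) := by
      rw [Fintype.card_option, Fintype.card_prod, Fintype.card_fin, Fintype.card_fin]
      have := Nat.mul_le_mul hα1 hω1
      omega
    have htot : (∑ t, gg t) = 0 := by
      have h6 : (∑ t, gg t)
          = (Fintype.card (Option (Fin Gᶜ.cliqueNum × Fin G.cliqueNum)) : ℚ) * (∑ t, gg t) := by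
        calc (∑ t, gg t) = ∑ t, (∑ t', gg t') := Finset.sum_congr rfl (fun t _ => hC t)
        _ = _ := by rw [Finset.sum_const, nsmul_eq_mul, Finset.card_univ]
      have h7 : ((Fintype.card (Option (Fin Gᶜ.cliqueNum × Fin G.cliqueNum)) : ℚ) - 1)
          * (∑ t, gg t) = 0 := by linarith
      rcases mul_eq_zero.mp h7 with h8 | h8
      · exfalso
        have h10 : (2 : ℚ) ≤ (Fintype.card (Option (Fin Gᶜ.cliqueNum × Fin G.cliqueNum)) : ℚ) := by
          exact_mod_cast hcardI
        linarith
      · exact h8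
    intro u
    rw [hC u, htot]
  -- dimension bound
  have hfin : Fintype.card (Option (Fin Gᶜ.cliqueNum × Fin G.cliqueNum)) ≤ Fintype.card V := by
    have h9 := hlin.fintype_card_le_finrank
    rwa [Module.finrank_pi] at h9
  rw [Fintype.card_option, Fintype.card_prod, Fintype.card_fin, Fintype.card_fin] at hfin
  have huniv : Fintype.card V ≤ G.cliqueNum * Gᶜ.cliqueNum := by
    have h7 := hyp Set.univ
    haveI : Fintype ↥(Set.univ : Set V) := Set.Finite.fintype (Set.toFinite _)
    have hc1 : (G.induce Set.univ).cliqueNum = G.cliqueNum :=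
      WPGT.cliqueNum_eq_of_iso G.induceUnivIso
    have hc2 : ((G.induce Set.univ)ᶜ).cliqueNum = Gᶜ.cliqueNum :=
      WPGT.cliqueNum_eq_of_iso (WPGT.complIso G.induceUnivIso)
    have hcu : Nat.card ↥(Set.univ : Set V) = Fintype.card V := by
      rw [Nat.card_congr (Equiv.Set.univ V), Nat.card_eq_fintype_card]
    rw [hc1, hc2, hcu] at h7
    exact h7
  rw [mul_comm] at huniv
  omega

end WPGTAux

/-- The weak perfect graph theorem: the complement of a perfect finite simple
graph is perfect. -/
theorem stmt_19 {d : ℕ} (G : SimpleGraph (Fin d)) (hG : isPerfect G) :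
    isPerfect Gᶜ := by
  intro s
  classical
  haveI : Fintype ↥s := Set.Finite.fintype (Set.toFinite s)
  have hyp : ∀ t : Set ↥s, Nat.card t ≤ ((Gᶜ.induce s).induce t).cliqueNum
      * (((Gᶜ.induce s).induce t)ᶜ).cliqueNum := by
    intro t
    haveI : Fintype ↥t := Set.Finite.fintype (Set.toFinite t)
    haveI : Fintype ↥(Subtype.val '' t) := Set.Finite.fintype (Set.toFinite _)
    have hc1 : ((Gᶜ.induce s).induce t).cliqueNum
        = ((G.induce (Subtype.val '' t))ᶜ).cliqueNum := by
      rw [← WPGT.induce_compl_eq]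
      exact WPGT.cliqueNum_eq_of_iso (WPGT.induceInduceIso Gᶜ s t)
    have hc2 : (((Gᶜ.induce s).induce t)ᶜ).cliqueNum
        = (G.induce (Subtype.val '' t)).cliqueNum := by
      have h1 : (((Gᶜ.induce s).induce t)ᶜ).cliqueNum
          = ((Gᶜ.induce (Subtype.val '' t))ᶜ).cliqueNum :=
        WPGT.cliqueNum_eq_of_iso (WPGT.complIso (WPGT.induceInduceIso Gᶜ s t))
      rw [h1, WPGT.induce_compl_eq G, compl_compl]
    have hcard' : Nat.card ↥t = Nat.card ↥(Subtype.val '' t) :=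
      Nat.card_congr (Equiv.Set.image _ _ Subtype.coe_injective)
    rw [hc1, hc2, hcard', mul_comm]
    exact WPGT.card_le_mul (G.induce (Subtype.val '' t)) (hG _)
  have hcol := WPGT.core (Fintype.card ↥s) ↥s (Gᶜ.induce s) rfl hyp
  exact WPGT.chromaticNumber_eq_of_colorable hcol
end
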